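/- arXiv:2503.07227 — 5 statements merged into one kernel-verified Lean document; each statement's English description precedes it below -/
import Mathlib

section
/- Let C ⊆ X be a finite nonempty subset with x* ∈ C, and assume the kernel is nonnegative, i.e. k(x,y) ≥ 0 for all x,y ∈ X. Then for every x ∈ X: if x is not incident to any c ∈ C, then Δ(x,C) = ‖φ(x)‖² + c*; otherwise Δ(x,C) = ‖φ(x)‖² + min( min_{c ∈ C, x ∼ c} (‖φ(c)‖² − 2·k(x,c)), c* ). -/
open scoped RealInnerProductSpace Classical

/-
Expanding `‖φ x - φ c‖² = ‖φ x‖² + (‖φ c‖² - 2 k(x,c))` reduces the claim to minimizing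
`‖φ c‖² - 2 k(x,c)` over `C`. On points not incident to `x` this is `‖φ c‖² ≥ c*`, while at
`x*` it is at most `c*` because the kernel is nonnegative; so the non-incident points
contribute exactly `c*` to the minimum.
-/

namespace Finset

variable {ι β : Type*} [LinearOrder β]

theorem inf'_eq_of_le_of_forall_le {s : Finset ι} (hs : s.Nonempty) {f : ι → β} {m : β}
    {a : ι} (ha : a ∈ s) (hfa : f a ≤ m) (hm : ∀ c ∈ s, m ≤ f c) : s.inf' hs f = m :=
  le_antisymm (inf'_le_of_le f ha hfa) (le_inf' hs f hm)

theorem inf'_eq_min_inf'_filter {s : Finset ι} (hs : s.Nonempty) (f : ι → β)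
    (p : ι → Prop) [DecidablePred p] (hp : (s.filter p).Nonempty) {m : β} {a : ι} (ha : a ∈ s)
    (hfa : f a ≤ m) (hm : ∀ c ∈ s, ¬p c → m ≤ f c) :
    s.inf' hs f = min ((s.filter p).inf' hp f) m := by
  refine le_antisymm (le_min ?_ (inf'_le_of_le f ha hfa)) (le_inf' hs f fun c hc => ?_)
  · exact le_inf' hp f fun c hc => inf'_le f (mem_filter.1 hc).1
  · by_cases hpc : p c
    · exact (min_le_left _ _).trans (inf'_le f (mem_filter.2 ⟨hc, hpc⟩))
    · exact (min_le_right _ _).trans (hm c hc hpc)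

theorem inf'_norm_sub_sq {H : Type*} [NormedAddCommGroup H] [InnerProductSpace ℝ H]
    {s : Finset ι} (hs : s.Nonempty) (u : H) (v : ι → H) :
    s.inf' hs (fun c => ‖u - v c‖ ^ 2) =
      ‖u‖ ^ 2 + s.inf' hs (fun c => ‖v c‖ ^ 2 - 2 * ⟪u, v c⟫) := by
  rw [apply_inf'_eq_inf'_comp hs (‖u‖ ^ 2 + ·) fun _ _ => (min_add_add_left _ _ _).symm]
  congr 1
  ext c
  simp only [Function.comp_apply, norm_sub_sq_real]
  ring

end Finset

/-- For a finite nonempty `C ⊆ X` containing the minimal-self-affinity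
point `x*`, and a nonnegative kernel, the squared distance `Δ(x,C)` from any `x ∈ X` to `C`
decomposes as: if `x` is incident to no point of `C` then `Δ(x,C) = ‖φ(x)‖² + c*`,
otherwise `Δ(x,C) = ‖φ(x)‖² + min(min_{c ∈ C, x ∼ c}(‖φ(c)‖² - 2 k(x,c)), c*)`. -/
theorem stmt0 {α H : Type*} [NormedAddCommGroup H] [InnerProductSpace ℝ H]
    (X C : Finset α) (φ : α → H) (xstar : α)
    (hCX : C ⊆ X) (hC : C.Nonempty) (hxC : xstar ∈ C)
    (hxmin : ∀ x ∈ X, ‖φ xstar‖ ^ 2 ≤ ‖φ x‖ ^ 2)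
    (hker : ∀ x ∈ X, ∀ y ∈ X, 0 ≤ ⟪φ x, φ y⟫)
    (x : α) (hx : x ∈ X) :
    ((∀ c ∈ C, ⟪φ x, φ c⟫ = 0) →
      C.inf' hC (fun c => ‖φ x - φ c‖ ^ 2) = ‖φ x‖ ^ 2 + ‖φ xstar‖ ^ 2) ∧
    (∀ hne : (C.filter fun c => ⟪φ x, φ c⟫ ≠ 0).Nonempty,
      C.inf' hC (fun c => ‖φ x - φ c‖ ^ 2) =
        ‖φ x‖ ^ 2 +
          min ((C.filter fun c => ⟪φ x, φ c⟫ ≠ 0).inf' hne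
                (fun c => ‖φ c‖ ^ 2 - 2 * ⟪φ x, φ c⟫))
              (‖φ xstar‖ ^ 2)) := by
  have hstar : ‖φ xstar‖ ^ 2 - 2 * ⟪φ x, φ xstar⟫ ≤ ‖φ xstar‖ ^ 2 := by
    linarith [hker x hx xstar (hCX hxC)]
  have hfar : ∀ c ∈ C, ⟪φ x, φ c⟫ = 0 → ‖φ xstar‖ ^ 2 ≤ ‖φ c‖ ^ 2 - 2 * ⟪φ x, φ c⟫ :=
    fun c hc h0 => by simpa [h0] using hxmin c (hCX hc)
  rw [Finset.inf'_norm_sub_sq]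
  refine ⟨fun h0 => ?_, fun hne => ?_⟩
  · rw [Finset.inf'_eq_of_le_of_forall_le hC hxC hstar fun c hc => hfar c hc (h0 c hc)]
  · rw [Finset.inf'_eq_min_inf'_filter hC _ _ hne hxC hstar fun c hc => hfar c hc ∘ not_not.1]
end

section
/- Let V = {1,…,n}, φ : V → H a map into a real inner product space with kernel matrix K given by K_{uv} = ⟨φ(u), φ(v)⟩, and W = diag(w(1),…,w(n)) with w(v) > 0 for all v. Let X ∈ {0,1}^{n×k} satisfy X·1_k = 1_n with each cluster π_j nonempty, let m_j = (Σ_{b∈π_j} w(b)·φ(b)) / (Σ_{b∈π_j} w(b)) be the weighted centroids, and Y = X·(XᵀWX)^{−1/2}. Then the weighted kernel k-means cost satisfies Σ_{j=1}^{k} Σ_{v∈π_j} w(v)·‖φ(v) − m_j‖² = tr(WK) − tr(Yᵀ W K W Y). -/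
open Matrix
open scoped RealInnerProductSpace Classical

/-!
Writing `X` as the indicator matrix of an assignment `c : V → Fin k`, the matrix `XᵀWX` is the
diagonal matrix of cluster weights `S_j`, so `M Mᵀ = M² = diag (S⁻¹)`. By cyclicity of the trace,
`tr(YᵀWKWY) = Σ_j (XᵀWKWX)_jj / S_j = Σ_j ‖Σ_{b ∈ π_j} w b • φ b‖² / S_j`. The weighted variance
identity `Σ_{v ∈ π} w v ‖φ v - m‖² = Σ_{v ∈ π} w v ‖φ v‖² - ‖Σ_{b ∈ π} w b • φ b‖² / S`, summed over
the clusters, gives `tr(WK)` minus the same sum.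
-/

open Finset

namespace Matrix

variable {ι κ : Type*} [DecidableEq κ]

def clusterMatrix (R : Type*) [Zero R] [One R] (c : ι → κ) : Matrix ι κ R :=
  of fun i j => if c i = j then 1 else 0

@[simp]
lemma clusterMatrix_apply_eq_one_iff {R : Type*} [MulZeroOneClass R] [Nontrivial R]
    {c : ι → κ} {i : ι} {j : κ} : clusterMatrix R c i j = 1 ↔ c i = j := by
  by_cases h : c i = j <;> simp [clusterMatrix, h]

lemma exists_eq_clusterMatrix [Fintype κ] {R : Type*} [Semiring R] [CharZero R]
    {X : Matrix ι κ R} (h01 : ∀ i j, X i j = 0 ∨ X i j = 1) (hrow : ∀ i, ∑ j, X i j = 1) :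
    ∃ c : ι → κ, X = clusterMatrix R c := by
  have hone : ∀ i, ∃ j, ({j | X i j = 1} : Finset κ) = {j} := by
    intro i
    rw [← card_eq_one, ← Nat.cast_eq_one (R := R), natCast_card_filter]
    refine (sum_congr rfl fun j _ => ?_).trans (hrow i)
    rcases h01 i j with h | h <;> simp [h]
  choose c hc using hone
  have hc' : ∀ i j, X i j = 1 ↔ c i = j := fun i j => by
    simpa [eq_comm] using Finset.ext_iff.1 (hc i) j
  refine ⟨c, ext fun i j => ?_⟩
  rcases h01 i j with h | h <;> simp [clusterMatrix, ← hc', h]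

lemma clusterMatrix_transpose_mul_mul_apply [Fintype ι] {R : Type*} [NonAssocSemiring R]
    (c : ι → κ) (A : Matrix ι ι R) (j j' : κ) :
    ((clusterMatrix R c)ᵀ * A * clusterMatrix R c) j j' =
      ∑ u with c u = j, ∑ v with c v = j', A u v := by
  simp only [mul_apply, sum_mul]
  rw [sum_comm]
  refine (sum_congr rfl fun u _ => ?_).trans (sum_filter _ _).symm
  by_cases h : c u = j <;> simp [clusterMatrix, sum_filter, h]

lemma clusterMatrix_transpose_mul_diagonal_mul [Fintype ι] [DecidableEq ι] {R : Type*}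
    [NonAssocSemiring R] (c : ι → κ) (w : ι → R) :
    (clusterMatrix R c)ᵀ * diagonal w * clusterMatrix R c =
      diagonal fun j => ∑ i with c i = j, w i := by
  ext j j'
  rw [clusterMatrix_transpose_mul_mul_apply]
  by_cases h : j = j'
  · subst h
    simp only [diagonal_apply_eq]
    exact sum_congr rfl fun u hu => by simp [diagonal_apply, (mem_filter.1 hu).2]
  · simp only [diagonal_apply_ne _ h]
    exact sum_eq_zero fun u hu => by simp [diagonal_apply, (mem_filter.1 hu).2, h]

variable {m n p R : Type*} [Fintype m] [Fintype n] [Fintype p] [CommSemiring R]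

lemma trace_transpose_mul_mul_eq_trace_mul_mul_transpose (X : Matrix m n R) (M : Matrix n p R)
    (B : Matrix m m R) : trace ((X * M)ᵀ * B * (X * M)) = trace (Xᵀ * B * X * (M * Mᵀ)) := by
  simp only [transpose_mul, Matrix.mul_assoc]
  rw [trace_mul_comm]
  simp only [Matrix.mul_assoc]

lemma trace_mul_diagonal [DecidableEq n] (A : Matrix n n R) (d : n → R) :
    trace (A * diagonal d) = ∑ i, A i i * d i := by
  simp [trace, mul_diagonal]

end Matrix

section InnerProductSpace

variable {ι H : Type*} [NormedAddCommGroup H] [InnerProductSpace ℝ H]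

lemma norm_sum_smul_sq (s : Finset ι) (a : ι → ℝ) (x : ι → H) :
    ‖∑ i ∈ s, a i • x i‖ ^ 2 = ∑ i ∈ s, ∑ j ∈ s, a i * ⟪x i, x j⟫ * a j := by
  simp only [← real_inner_self_eq_norm_sq, sum_inner, inner_sum, real_inner_smul_left,
    real_inner_smul_right]
  exact sum_congr rfl fun i _ => sum_congr rfl fun j _ => by rw [real_inner_comm]; ring

lemma sum_mul_norm_sub_centroid_sq (s : Finset ι) (w : ι → ℝ) (x : ι → H) :
    ∑ v ∈ s, w v * ‖x v - (∑ b ∈ s, w b)⁻¹ • ∑ b ∈ s, w b • x b‖ ^ 2 =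
      ∑ v ∈ s, w v * ‖x v‖ ^ 2 - (∑ b ∈ s, w b)⁻¹ * ‖∑ b ∈ s, w b • x b‖ ^ 2 := by
  set S := ∑ b ∈ s, w b
  set z := ∑ b ∈ s, w b • x b
  have hz : ∑ v ∈ s, w v * ⟪x v, z⟫ = ‖z‖ ^ 2 := by
    simp only [← real_inner_self_eq_norm_sq, z, sum_inner, real_inner_smul_left]
  have hS : S * S⁻¹ ^ 2 = S⁻¹ := by
    rcases eq_or_ne S 0 with h | h
    · simp [h]
    · field_simp
  calc ∑ v ∈ s, w v * ‖x v - S⁻¹ • z‖ ^ 2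
      = ∑ v ∈ s, (w v * ‖x v‖ ^ 2 - 2 * S⁻¹ * (w v * ⟪x v, z⟫) + w v * (S⁻¹ ^ 2 * ‖z‖ ^ 2)) := by
        refine sum_congr rfl fun v _ => ?_
        rw [norm_sub_sq_real, real_inner_smul_right, norm_smul, mul_pow, Real.norm_eq_abs, sq_abs]
        ring
    _ = ∑ v ∈ s, w v * ‖x v‖ ^ 2 - 2 * S⁻¹ * ‖z‖ ^ 2 + S * S⁻¹ ^ 2 * ‖z‖ ^ 2 := by
        rw [sum_add_distrib, sum_sub_distrib, ← mul_sum, hz, ← sum_mul]; ring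
    _ = ∑ v ∈ s, w v * ‖x v‖ ^ 2 - S⁻¹ * ‖z‖ ^ 2 := by
        rw [hS]; ring

end InnerProductSpace

/-- For a feature map `φ` with kernel matrix `K_{uv} = ⟨φ(u),φ(v)⟩`,
positive weights `w`, membership matrix `X` with nonempty clusters `π_j`, weighted
centroids `m_j`, and `Y = X (XᵀWX)^{-1/2}` (here: `Y = X M` with `M` symmetric and
`M² = (XᵀWX)⁻¹`), the weighted kernel k-means cost satisfies
`Σ_j Σ_{v∈π_j} w(v)‖φ(v) − m_j‖² = tr(WK) − tr(YᵀWKWY)`. -/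
theorem stmt10 {n k : ℕ} {H : Type*} [NormedAddCommGroup H] [InnerProductSpace ℝ H]
    (φ : Fin n → H) (K : Matrix (Fin n) (Fin n) ℝ)
    (hK : ∀ u v, K u v = ⟪φ u, φ v⟫)
    (w : Fin n → ℝ) (hw : ∀ v, 0 < w v)
    (X : Matrix (Fin n) (Fin k) ℝ)
    (hX01 : ∀ i j, X i j = 0 ∨ X i j = 1)
    (hXrow : ∀ i, ∑ j, X i j = 1)
    (hne : ∀ j, (Finset.univ.filter fun i => X i j = 1).Nonempty)
    (M : Matrix (Fin k) (Fin k) ℝ) (hMsymm : M.IsSymm)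
    (hMsq : M * M = (Xᵀ * Matrix.diagonal w * X)⁻¹) :
    (∑ j : Fin k, ∑ v ∈ Finset.univ.filter (fun i => X i j = 1),
        w v * ‖φ v -
          (∑ b ∈ Finset.univ.filter (fun i => X i j = 1), w b)⁻¹ •
            ∑ b ∈ Finset.univ.filter (fun i => X i j = 1), w b • φ b‖ ^ 2) =
      Matrix.trace (Matrix.diagonal w * K) -
        Matrix.trace ((X * M)ᵀ * Matrix.diagonal w * K * Matrix.diagonal w * (X * M)) := by
  obtain ⟨c, rfl⟩ := exists_eq_clusterMatrix hX01 hXrow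
  simp only [clusterMatrix_apply_eq_one_iff] at hne ⊢
  set P := clusterMatrix ℝ c
  set S : Fin k → ℝ := fun j => ∑ i with c i = j, w i
  have hS : ∀ j, S j ≠ 0 := fun j => (sum_pos (fun i _ => hw i) (hne j)).ne'
  have hMM : M * Mᵀ = diagonal S⁻¹ := by
    rw [hMsymm.eq, hMsq, clusterMatrix_transpose_mul_diagonal_mul]
    refine inv_eq_left_inv ?_
    rw [diagonal_mul_diagonal, ← diagonal_one]
    exact congrArg diagonal (funext fun j => inv_mul_cancel₀ (hS j))
  have hWK : trace (diagonal w * K) = ∑ v, w v * ‖φ v‖ ^ 2 := by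
    simp [trace, hK]
  have hWKW : ∀ j, (Pᵀ * (diagonal w * K * diagonal w) * P) j j =
      ‖∑ i with c i = j, w i • φ i‖ ^ 2 := fun j => by
    simp [P, clusterMatrix_transpose_mul_mul_apply, norm_sum_smul_sq, hK]
  rw [show (P * M)ᵀ * diagonal w * K * diagonal w * (P * M) =
      (P * M)ᵀ * (diagonal w * K * diagonal w) * (P * M) by simp only [Matrix.mul_assoc]]
  rw [trace_transpose_mul_mul_eq_trace_mul_mul_transpose, hMM, trace_mul_diagonal, hWK,
    ← sum_fiberwise univ c, ← sum_sub_distrib]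
  refine sum_congr rfl fun j _ => ?_
  rw [sum_mul_norm_sub_centroid_sq, hWKW]
  simp [S, mul_comm]
end

section
/- Let V be a finite set with |V| = n ≥ 2, and w : V×V → ℝ_{≥0} symmetric with deg(i) = Σ_{j∈V} w(i,j) > 0 for all i; write deg*(i) = Σ_{j≠i} w(i,j). Let C > 0 and λ > 0 be constants, L = 6·C·log(n)/λ, and p_i(j) = (C·log(n)/λ)·w(i,j)/deg(i); assume p_i(j) ≤ 1 for all i ≠ j. Set p(i,j) = p_i(j) + p_j(i) − p_i(j)·p_j(i). Suppose p̂(i,j) are reals with (6/7)·p(i,j) ≤ p̂(i,j) ≤ (36/5)·p(i,j) and p̂(i,j) > 0 whenever w(i,j) > 0, and q : V×V → ℝ_{≥0} satisfies w(i,j)/(2·deg(i)) ≤ q(i,j) ≤ 2·w(i,j)/deg(i) for all i ≠ j. Then for every i (with terms where w(i,j) = 0 read as 0): (5/12)·deg*(i) ≤ L·Σ_{j≠i} (q(i,j) + q(j,i))·w(i,j)/p̂(i,j) ≤ 28·deg*(i). -/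
/-!
Write `K = C log n / λ`, `r = w(i,j)/deg(i) + w(i,j)/deg(j)`, so that `p_i(j) + p_j(i) = K r`.
For probabilities `x, y ∈ [0,1]` the union probability `x + y - xy` lies in `[(x+y)/2, x+y]`,
hence `p̂(i,j) ∈ [(3/7) K r, (36/5) K r]`, while `q(i,j) + q(j,i) ∈ [r/2, 2r]`. The factor `K r`
cancels in each reweighted term `L (q(i,j) + q(j,i)) w(i,j) / p̂(i,j)`, leaving it between
`(5/12) w(i,j)` and `28 w(i,j)`; summing over `j ≠ i` gives the claim.
-/

open Finset

lemma half_add_le_add_sub_mul {x y : ℝ} (hx0 : 0 ≤ x) (hx1 : x ≤ 1) (hy0 : 0 ≤ y)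
    (hy1 : y ≤ 1) : (x + y) / 2 ≤ x + y - x * y := by
  nlinarith [mul_nonneg hx0 (sub_nonneg.2 hy1), mul_nonneg hy0 (sub_nonneg.2 hx1)]

lemma add_sub_mul_le_add {x y : ℝ} (hx : 0 ≤ x) (hy : 0 ≤ y) : x + y - x * y ≤ x + y :=
  sub_le_self _ (mul_nonneg hx hy)

lemma reweighted_term_bounds {K r Q ph w : ℝ} (hK : 0 < K) (hr : 0 < r) (hw : 0 ≤ w)
    (hQ_lb : r / 2 ≤ Q) (hQ_ub : Q ≤ 2 * r)
    (hph_lb : 3 / 7 * (K * r) ≤ ph) (hph_ub : ph ≤ 36 / 5 * (K * r)) :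
    5 / 12 * w ≤ 6 * K * (Q * w / ph) ∧ 6 * K * (Q * w / ph) ≤ 28 * w := by
  have hph : 0 < ph := lt_of_lt_of_le (by positivity) hph_lb
  rw [mul_div_assoc', le_div_iff₀ hph, div_le_iff₀ hph]
  constructor
  · calc 5 / 12 * w * ph ≤ 5 / 12 * w * (36 / 5 * (K * r)) := by gcongr
      _ = 6 * K * (r / 2) * w := by ring
      _ ≤ 6 * K * (Q * w) := by rw [← mul_assoc]; gcongr
  · calc 6 * K * (Q * w) ≤ 6 * K * (2 * r) * w := by rw [← mul_assoc]; gcongr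
      _ = 28 * w * (3 / 7 * (K * r)) := by ring
      _ ≤ 28 * w * ph := by gcongr

lemma reweighted_edge_bounds {K w di dj pij pji ph qij qji : ℝ} (hK : 0 < K) (hw : 0 < w)
    (hdi : 0 < di) (hdj : 0 < dj) (hpij : pij = K * (w / di)) (hpji : pji = K * (w / dj))
    (hpij1 : pij ≤ 1) (hpji1 : pji ≤ 1)
    (hph_lb : 6 / 7 * (pij + pji - pij * pji) ≤ ph)
    (hph_ub : ph ≤ 36 / 5 * (pij + pji - pij * pji))
    (hqij_lb : w / (2 * di) ≤ qij) (hqij_ub : qij ≤ 2 * w / di)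
    (hqji_lb : w / (2 * dj) ≤ qji) (hqji_ub : qji ≤ 2 * w / dj) :
    5 / 12 * w ≤ 6 * K * ((qij + qji) * w / ph) ∧ 6 * K * ((qij + qji) * w / ph) ≤ 28 * w := by
  set r := w / di + w / dj with hr
  have hpij0 : 0 ≤ pij := hpij ▸ by positivity
  have hpji0 : 0 ≤ pji := hpji ▸ by positivity
  have hsum : pij + pji = K * r := by rw [hpij, hpji, hr]; ring
  have hunion_lb := half_add_le_add_sub_mul hpij0 hpij1 hpji0 hpji1
  have hunion_ub := add_sub_mul_le_add hpij0 hpji0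
  have hQ_lb : r / 2 ≤ qij + qji := calc
      r / 2 = w / (2 * di) + w / (2 * dj) := by rw [hr]; ring
      _ ≤ qij + qji := add_le_add hqij_lb hqji_lb
  have hQ_ub : qij + qji ≤ 2 * r := calc
      qij + qji ≤ 2 * w / di + 2 * w / dj := add_le_add hqij_ub hqji_ub
      _ = 2 * r := by rw [hr]; ring
  exact reweighted_term_bounds hK (by positivity) hw.le hQ_lb hQ_ub
    (by linarith) (by linarith)

theorem stmt14_general (n : ℕ) (hn : 2 ≤ n)
    (w : Fin n → Fin n → ℝ) (hw0 : ∀ i j, 0 ≤ w i j)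
    (hwsymm : ∀ i j, w i j = w j i)
    (hdeg : ∀ i, 0 < ∑ j, w i j)
    (C lam : ℝ) (hC : 0 < C) (hlam : 0 < lam)
    (p : Fin n → Fin n → ℝ)
    (hpdef : ∀ i j, p i j = C * Real.log n / lam * (w i j / ∑ j', w i j'))
    (hple : ∀ i j, i ≠ j → p i j ≤ 1)
    (phat : Fin n → Fin n → ℝ)
    (hphat_lb : ∀ i j, i ≠ j → 6 / 7 * (p i j + p j i - p i j * p j i) ≤ phat i j)
    (hphat_ub : ∀ i j, i ≠ j → phat i j ≤ 36 / 5 * (p i j + p j i - p i j * p j i))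
    (q : Fin n → Fin n → ℝ)
    (hq_lb : ∀ i j, i ≠ j → w i j / (2 * ∑ j', w i j') ≤ q i j)
    (hq_ub : ∀ i j, i ≠ j → q i j ≤ 2 * w i j / ∑ j', w i j')
    (i : Fin n) :
    (5 / 12 * ∑ j ∈ Finset.univ.erase i, w i j) ≤
        6 * C * Real.log n / lam *
          ∑ j ∈ Finset.univ.erase i,
            (if w i j = 0 then 0 else (q i j + q j i) * w i j / phat i j) ∧
    6 * C * Real.log n / lam *
        ∑ j ∈ Finset.univ.erase i,
          (if w i j = 0 then 0 else (q i j + q j i) * w i j / phat i j) ≤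
      28 * ∑ j ∈ Finset.univ.erase i, w i j := by
  set K := C * Real.log n / lam with hK_def
  have hK : 0 < K := by
    have : (1 : ℝ) < n := by exact_mod_cast hn
    have := Real.log_pos this
    positivity
  have hterm : ∀ j ∈ univ.erase i,
      5 / 12 * w i j ≤ 6 * K * (if w i j = 0 then 0 else (q i j + q j i) * w i j / phat i j) ∧
      6 * K * (if w i j = 0 then 0 else (q i j + q j i) * w i j / phat i j) ≤ 28 * w i j := by
    intro j hj
    have hij : i ≠ j := (ne_of_mem_erase hj).symm
    split_ifs with hwz
    · simp [hwz]
    · have hpji := hpdef j i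
      have hqji_lb := hq_lb j i hij.symm
      have hqji_ub := hq_ub j i hij.symm
      rw [hwsymm j i] at hpji hqji_lb hqji_ub
      exact reweighted_edge_bounds hK ((hw0 i j).lt_of_ne' hwz) (hdeg i) (hdeg j) (hpdef i j)
        hpji (hple i j hij) (hple j i hij.symm) (hphat_lb i j hij) (hphat_ub i j hij)
        (hq_lb i j hij) (hq_ub i j hij) hqji_lb hqji_ub
  rw [show 6 * C * Real.log n / lam = 6 * K by ring]
  simp only [mul_sum]
  exact ⟨sum_le_sum fun j hj => (hterm j hj).1, sum_le_sum fun j hj => (hterm j hj).2⟩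

/-- Deterministic core of the expected-degree preservation argument
for the cluster-preserving sparsifier: with `L = 6C·log n/λ` sampling rounds,
per-round sampling probabilities `q(i,j) ∈ [w(i,j)/(2deg(i)), 2w(i,j)/deg(i)]`, and
estimated edge probabilities `p̂(i,j) ∈ [(6/7)p(i,j), (36/5)p(i,j)]`, the expected
degree (excluding the self-affinity) of each vertex `i` in the sparsifier lies in
`[(5/12)deg*(i), 28·deg*(i)]` (terms with `w(i,j) = 0` read as `0`). -/
theorem stmt14 (n : ℕ) (hn : 2 ≤ n)
    (w : Fin n → Fin n → ℝ) (hw0 : ∀ i j, 0 ≤ w i j)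
    (hwsymm : ∀ i j, w i j = w j i)
    (hdeg : ∀ i, 0 < ∑ j, w i j)
    (C lam : ℝ) (hC : 0 < C) (hlam : 0 < lam)
    (p : Fin n → Fin n → ℝ)
    (hpdef : ∀ i j, p i j = C * Real.log n / lam * (w i j / ∑ j', w i j'))
    (hple : ∀ i j, i ≠ j → p i j ≤ 1)
    (phat : Fin n → Fin n → ℝ)
    (hphat_lb : ∀ i j, i ≠ j → 6 / 7 * (p i j + p j i - p i j * p j i) ≤ phat i j)
    (hphat_ub : ∀ i j, i ≠ j → phat i j ≤ 36 / 5 * (p i j + p j i - p i j * p j i))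
    (hphat_pos : ∀ i j, i ≠ j → 0 < w i j → 0 < phat i j)
    (q : Fin n → Fin n → ℝ) (hq0 : ∀ i j, 0 ≤ q i j)
    (hq_lb : ∀ i j, i ≠ j → w i j / (2 * ∑ j', w i j') ≤ q i j)
    (hq_ub : ∀ i j, i ≠ j → q i j ≤ 2 * w i j / ∑ j', w i j')
    (i : Fin n) :
    (5 / 12 * ∑ j ∈ Finset.univ.erase i, w i j) ≤
        6 * C * Real.log n / lam *
          ∑ j ∈ Finset.univ.erase i,
            (if w i j = 0 then 0 else (q i j + q j i) * w i j / phat i j) ∧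
    6 * C * Real.log n / lam *
        ∑ j ∈ Finset.univ.erase i,
          (if w i j = 0 then 0 else (q i j + q j i) * w i j / phat i j) ≤
      28 * ∑ j ∈ Finset.univ.erase i, w i j :=
  stmt14_general n hn w hw0 hwsymm hdeg C lam hC hlam p hpdef hple phat hphat_lb hphat_ub q hq_lb
    hq_ub i
end

section
/- Under the following hypotheses, for every i (terms with w(i,j) = 0 read as 0): L·Σ_{j≠i} (q(i,j) + q(j,i))·w(i,j)²/p̂(i,j)² ≤ 98·deg(i)²·λ/(3·C·log(n)). Hypotheses: V finite with |V| = n ≥ 2; w : V×V → ℝ_{≥0} symmetric with deg(i) = Σ_{j∈V} w(i,j) > 0; C > 0, λ > 0; L = 6·C·log(n)/λ; p_i(j) = (C·log(n)/λ)·w(i,j)/deg(i) with p_i(j) ≤ 1 for all i ≠ j; p(i,j) = p_i(j) + p_j(i) − p_i(j)·p_j(i); (6/7)·p(i,j) ≤ p̂(i,j) ≤ (36/5)·p(i,j) with p̂(i,j) > 0 whenever w(i,j) > 0; and w(i,j)/(2·deg(i)) ≤ q(i,j) ≤ 2·w(i,j)/deg(i) for all i ≠ j. -/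
/-!
Write `K = C log n / λ`, so `L = 6K`. Since `pᵢ(j), pⱼ(i) ∈ [0, 1]`, the union probability
`p(i,j)` dominates both, so `p̂(i,j)` is at least `6/7` of `K w(i,j)/deg i` and of `K w(i,j)/deg j`.
Together with `q ≤ 2w/deg`, every summand is at most `(49/9) deg(i) w(i,j)/K²`; summing over `j`
gives `(49/9) deg(i)²/K²`, and `6K · 49/(9K²) = 98/(3K)`.
-/

open Finset

lemma max_le_add_sub_mul {𝕜 : Type*} [CommRing 𝕜] [LinearOrder 𝕜] [IsStrictOrderedRing 𝕜]
    {a b : 𝕜} (ha₀ : 0 ≤ a) (ha₁ : a ≤ 1) (hb₀ : 0 ≤ b) (hb₁ : b ≤ 1) :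
    max a b ≤ a + b - a * b :=
  max_le (by nlinarith) (by nlinarith)

/-- The factor `1/dⱼ` in the bound on `qⱼᵢ` is cancelled by bounding `ph²` below by the product
of its two lower bounds. -/
lemma add_mul_sq_div_sq_le {𝕜 : Type*} [Field 𝕜] [LinearOrder 𝕜] [IsStrictOrderedRing 𝕜]
    {dᵢ dⱼ K w ph qᵢⱼ qⱼᵢ : 𝕜} (hdᵢ : 0 < dᵢ) (hdⱼ : 0 < dⱼ) (hK : 0 < K) (hw : 0 < w)
    (hphᵢ : 6 / 7 * (K * (w / dᵢ)) ≤ ph) (hphⱼ : 6 / 7 * (K * (w / dⱼ)) ≤ ph)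
    (hqᵢⱼ : qᵢⱼ ≤ 2 * w / dᵢ) (hqⱼᵢ : qⱼᵢ ≤ 2 * w / dⱼ) :
    (qᵢⱼ + qⱼᵢ) * w ^ 2 / ph ^ 2 ≤ 49 / 9 * dᵢ / K ^ 2 * w := by
  set a := 6 / 7 * (K * (w / dᵢ))
  set b := 6 / 7 * (K * (w / dⱼ))
  have ha : 0 < a := by positivity
  have hb : 0 < b := by positivity
  have hsq_a : a ^ 2 ≤ ph ^ 2 := pow_le_pow_left₀ ha.le hphᵢ 2
  have hsq_ab : a * b ≤ ph ^ 2 := sq ph ▸ mul_le_mul hphᵢ hphⱼ hb.le (ha.trans_le hphᵢ).le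
  have hᵢⱼ : qᵢⱼ * (w ^ 2 / ph ^ 2) ≤ 49 / 18 * dᵢ / K ^ 2 * w :=
    calc qᵢⱼ * (w ^ 2 / ph ^ 2) ≤ 2 * w / dᵢ * (w ^ 2 / a ^ 2) := by
          gcongr
      _ = 49 / 18 * dᵢ / K ^ 2 * w := by
          simp only [a]
          field_simp
          ring
  have hⱼᵢ : qⱼᵢ * (w ^ 2 / ph ^ 2) ≤ 49 / 18 * dᵢ / K ^ 2 * w :=
    calc qⱼᵢ * (w ^ 2 / ph ^ 2) ≤ 2 * w / dⱼ * (w ^ 2 / (a * b)) := by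
          gcongr
      _ = 49 / 18 * dᵢ / K ^ 2 * w := by
          simp only [a, b]
          field_simp
          ring
  calc (qᵢⱼ + qⱼᵢ) * w ^ 2 / ph ^ 2 = qᵢⱼ * (w ^ 2 / ph ^ 2) + qⱼᵢ * (w ^ 2 / ph ^ 2) := by ring
    _ ≤ 49 / 9 * dᵢ / K ^ 2 * w := (add_le_add hᵢⱼ hⱼᵢ).trans_eq (by ring)

lemma sum_erase_le_mul_sum {ι R : Type*} [Fintype ι] [DecidableEq ι] [Semiring R] [PartialOrder R]
    [IsOrderedRing R] {f w : ι → R} {c : R} (i : ι) (hc : 0 ≤ c) (hw : ∀ j, 0 ≤ w j)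
    (hf : ∀ j ∈ univ.erase i, f j ≤ c * w j) :
    ∑ j ∈ univ.erase i, f j ≤ c * ∑ j, w j :=
  calc ∑ j ∈ univ.erase i, f j ≤ c * ∑ j ∈ univ.erase i, w j := mul_sum _ _ c ▸ sum_le_sum hf
    _ ≤ c * ∑ j, w j :=
      mul_le_mul_of_nonneg_left
        (sum_le_sum_of_subset_of_nonneg (erase_subset i univ) fun j _ _ => hw j) hc

theorem stmt16_general (n : ℕ) (hn : 2 ≤ n)
    (w : Fin n → Fin n → ℝ) (hw0 : ∀ i j, 0 ≤ w i j)
    (hwsymm : ∀ i j, w i j = w j i)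
    (hdeg : ∀ i, 0 < ∑ j, w i j)
    (C lam : ℝ) (hC : 0 < C) (hlam : 0 < lam)
    (p : Fin n → Fin n → ℝ)
    (hpdef : ∀ i j, p i j = C * Real.log n / lam * (w i j / ∑ j', w i j'))
    (hple : ∀ i j, i ≠ j → p i j ≤ 1)
    (phat : Fin n → Fin n → ℝ)
    (hphat_lb : ∀ i j, i ≠ j → 6 / 7 * (p i j + p j i - p i j * p j i) ≤ phat i j)
    (q : Fin n → Fin n → ℝ)
    (hq_ub : ∀ i j, i ≠ j → q i j ≤ 2 * w i j / ∑ j', w i j')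
    (i : Fin n) :
    6 * C * Real.log n / lam *
        ∑ j ∈ Finset.univ.erase i,
          (if w i j = 0 then 0 else (q i j + q j i) * (w i j) ^ 2 / (phat i j) ^ 2) ≤
      98 * (∑ j, w i j) ^ 2 * lam / (3 * C * Real.log n) := by
  have hlog : 0 < Real.log n := Real.log_pos (by exact_mod_cast hn)
  set K := C * Real.log n / lam with hK_def
  have hK : 0 < K := by positivity
  have hterm : ∀ j ∈ univ.erase i,
      (if w i j = 0 then 0 else (q i j + q j i) * (w i j) ^ 2 / (phat i j) ^ 2) ≤
        49 / 9 * (∑ j, w i j) / K ^ 2 * w i j := by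
    intro j hj
    have hji : j ≠ i := ne_of_mem_erase hj
    split_ifs with hw
    · simp [hw]
    have hpji : p j i = K * (w i j / ∑ k, w j k) := by rw [hpdef, hwsymm]
    have hp_nonneg : ∀ a b, 0 ≤ p a b := fun a b => by
      rw [hpdef]
      exact mul_nonneg hK.le (div_nonneg (hw0 a b) (hdeg a).le)
    have hph : 6 / 7 * max (p i j) (p j i) ≤ phat i j :=
      (mul_le_mul_of_nonneg_left (max_le_add_sub_mul (hp_nonneg i j) (hple i j hji.symm)
        (hp_nonneg j i) (hple j i hji)) (by norm_num)).trans (hphat_lb i j hji.symm)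
    refine add_mul_sq_div_sq_le (hdeg i) (hdeg j) hK ((hw0 i j).lt_of_ne' hw) ?_ ?_
      (hq_ub i j hji.symm) (hwsymm i j ▸ hq_ub j i hji)
    · exact hpdef i j ▸ (mul_le_mul_of_nonneg_left (le_max_left _ _) (by norm_num)).trans hph
    · exact hpji ▸ (mul_le_mul_of_nonneg_left (le_max_right _ _) (by norm_num)).trans hph
  rw [show 6 * C * Real.log n / lam = 6 * K by rw [hK_def]; ring]
  calc 6 * K * ∑ j ∈ univ.erase i,
          (if w i j = 0 then 0 else (q i j + q j i) * (w i j) ^ 2 / (phat i j) ^ 2)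
      ≤ 6 * K * (49 / 9 * (∑ j, w i j) / K ^ 2 * ∑ j, w i j) := by
        gcongr
        exact sum_erase_le_mul_sum i (by have := hdeg i; positivity) (hw0 i) hterm
    _ = 98 * (∑ j, w i j) ^ 2 * lam / (3 * C * Real.log n) := by
        rw [hK_def]
        field_simp
        ring

/-- Deterministic bound on the second-moment quantity `R` in the
Bernstein step of the degree-concentration proof:
`L·Σ_{j≠i} (q(i,j)+q(j,i))·w(i,j)²/p̂(i,j)² ≤ 98·deg(i)²·λ/(3C·log n)`
(terms with `w(i,j) = 0` read as `0`). -/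
theorem stmt16 (n : ℕ) (hn : 2 ≤ n)
    (w : Fin n → Fin n → ℝ) (hw0 : ∀ i j, 0 ≤ w i j)
    (hwsymm : ∀ i j, w i j = w j i)
    (hdeg : ∀ i, 0 < ∑ j, w i j)
    (C lam : ℝ) (hC : 0 < C) (hlam : 0 < lam)
    (p : Fin n → Fin n → ℝ)
    (hpdef : ∀ i j, p i j = C * Real.log n / lam * (w i j / ∑ j', w i j'))
    (hple : ∀ i j, i ≠ j → p i j ≤ 1)
    (phat : Fin n → Fin n → ℝ)
    (hphat_lb : ∀ i j, i ≠ j → 6 / 7 * (p i j + p j i - p i j * p j i) ≤ phat i j)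
    (hphat_ub : ∀ i j, i ≠ j → phat i j ≤ 36 / 5 * (p i j + p j i - p i j * p j i))
    (hphat_pos : ∀ i j, i ≠ j → 0 < w i j → 0 < phat i j)
    (q : Fin n → Fin n → ℝ) (hq0 : ∀ i j, 0 ≤ q i j)
    (hq_lb : ∀ i j, i ≠ j → w i j / (2 * ∑ j', w i j') ≤ q i j)
    (hq_ub : ∀ i j, i ≠ j → q i j ≤ 2 * w i j / ∑ j', w i j')
    (i : Fin n) :
    6 * C * Real.log n / lam *
        ∑ j ∈ Finset.univ.erase i,
          (if w i j = 0 then 0 else (q i j + q j i) * (w i j) ^ 2 / (phat i j) ^ 2) ≤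
      98 * (∑ j, w i j) ^ 2 * lam / (3 * C * Real.log n) :=
  stmt16_general n hn w hw0 hwsymm hdeg C lam hC hlam p hpdef hple phat hphat_lb q hq_ub i
end

section
/- Under the following hypotheses, for all disjoint subsets S, T ⊆ V (terms with w(u,v) = 0 read as 0): L·Σ_{u∈S} Σ_{v∈T} (q(u,v) + q(v,u))·w(u,v)/p̂(u,v) ≤ 28·Σ_{u∈S} Σ_{v∈T} w(u,v). Hypotheses: V finite with |V| = n ≥ 2; w : V×V → ℝ_{≥0} symmetric with deg(i) = Σ_{j∈V} w(i,j) > 0; C > 0, λ > 0; L = 6·C·log(n)/λ; p_i(j) = (C·log(n)/λ)·w(i,j)/deg(i) with p_i(j) ≤ 1 for all i ≠ j; p(i,j) = p_i(j) + p_j(i) − p_i(j)·p_j(i); (6/7)·p(i,j) ≤ p̂(i,j) ≤ (36/5)·p(i,j) with p̂(i,j) > 0 whenever w(i,j) > 0; and w(i,j)/(2·deg(i)) ≤ q(i,j) ≤ 2·w(i,j)/deg(i) for all i ≠ j. -/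
/-
For an edge `uv` let `d = min(deg u, deg v)`. Both sampling probabilities `q(u,v)`, `q(v,u)` are at
most `2w/d`, while `p(u,v)`, the probability that at least one endpoint samples the edge, is at
least the larger of `p_u(v)`, `p_v(u)`, which is `(C log n / λ)·w/d`. Hence
`p̂(u,v) ≥ (6/7)(C log n / λ)·w/d`, and each term of the cut sum is at most
`6 (C log n / λ) · (4w/d) · w / ((6/7)(C log n / λ)·w/d) = 28 w`.
-/

lemma max_le_add_sub_mul_s18 {a b : ℝ} (ha : 0 ≤ a) (hb : 0 ≤ b) (ha1 : a ≤ 1) (hb1 : b ≤ 1) :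
    max a b ≤ a + b - a * b :=
  max_le (by nlinarith) (by nlinarith)

lemma cut_term_le {A w du dv q₁ q₂ r : ℝ} (hA : 0 < A) (hw : 0 < w) (hdu : 0 < du)
    (hdv : 0 < dv) (hq₁ : q₁ ≤ 2 * w / du) (hq₂ : q₂ ≤ 2 * w / dv)
    (hp₁ : A * (w / du) ≤ 1) (hp₂ : A * (w / dv) ≤ 1)
    (hr : 6 / 7 * (A * (w / du) + A * (w / dv) - A * (w / du) * (A * (w / dv))) ≤ r) :
    6 * A * ((q₁ + q₂) * w / r) ≤ 28 * w := by
  set m := min du dv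
  have hm : 0 < m := lt_min hdu hdv
  have hq : q₁ + q₂ ≤ 4 * w / m :=
    calc q₁ + q₂ ≤ 2 * w / m + 2 * w / m :=
          add_le_add (hq₁.trans (by gcongr; exact min_le_left _ _))
            (hq₂.trans (by gcongr; exact min_le_right _ _))
      _ = 4 * w / m := by ring
  have hunion : A * (w / m) ≤ A * (w / du) + A * (w / dv) - A * (w / du) * (A * (w / dv)) := by
    refine le_trans ?_ (max_le_add_sub_mul_s18 (by positivity) (by positivity) hp₁ hp₂)
    obtain h | h : m = du ∨ m = dv := min_choice du dv <;> rw [h]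
    exacts [le_max_left _ _, le_max_right _ _]
  have hr' : 6 / 7 * (A * (w / m)) ≤ r := by linarith
  have hr0 : 0 < r := lt_of_lt_of_le (by positivity) hr'
  rw [mul_div_assoc', div_le_iff₀ hr0]
  calc 6 * A * ((q₁ + q₂) * w) ≤ 6 * A * (4 * w / m * w) := by gcongr
    _ = 28 * w * (6 / 7 * (A * (w / m))) := by field_simp; ring
    _ ≤ 28 * w * r := by gcongr

theorem stmt18_general (n : ℕ) (hn : 2 ≤ n)
    (w : Fin n → Fin n → ℝ) (hw0 : ∀ i j, 0 ≤ w i j)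
    (hwsymm : ∀ i j, w i j = w j i)
    (hdeg : ∀ i, 0 < ∑ j, w i j)
    (C lam : ℝ) (hC : 0 < C) (hlam : 0 < lam)
    (p : Fin n → Fin n → ℝ)
    (hpdef : ∀ i j, p i j = C * Real.log n / lam * (w i j / ∑ j', w i j'))
    (hple : ∀ i j, i ≠ j → p i j ≤ 1)
    (phat : Fin n → Fin n → ℝ)
    (hphat_lb : ∀ i j, i ≠ j → 6 / 7 * (p i j + p j i - p i j * p j i) ≤ phat i j)
    (q : Fin n → Fin n → ℝ)
    (hq_ub : ∀ i j, i ≠ j → q i j ≤ 2 * w i j / ∑ j', w i j')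
    (S T : Finset (Fin n)) (hST : Disjoint S T) :
    6 * C * Real.log n / lam *
        ∑ u ∈ S, ∑ v ∈ T,
          (if w u v = 0 then 0 else (q u v + q v u) * w u v / phat u v) ≤
      28 * ∑ u ∈ S, ∑ v ∈ T, w u v := by
  set A := C * Real.log n / lam
  have hA : 0 < A := by
    have := Real.log_pos (by exact_mod_cast hn : (1 : ℝ) < n)
    positivity
  rw [show 6 * C * Real.log n / lam = 6 * A by ring, Finset.mul_sum, Finset.mul_sum]
  refine Finset.sum_le_sum fun u hu => ?_
  rw [Finset.mul_sum, Finset.mul_sum]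
  refine Finset.sum_le_sum fun v hv => ?_
  have huv : u ≠ v := Finset.disjoint_iff_ne.mp hST u hu v hv
  split_ifs with hw
  · simp [hw]
  have hp := hple u v huv
  have hp' := hple v u huv.symm
  have hr := hphat_lb u v huv
  have hq' := hq_ub v u huv.symm
  rw [hpdef] at hp hp'
  rw [hpdef u v, hpdef v u] at hr
  rw [hwsymm v u] at hp' hr hq'
  exact cut_term_le hA ((hw0 u v).lt_of_ne' hw) (hdeg u) (hdeg v) (hq_ub u v huv) hq' hp hp' hr

/-- Deterministic core of the cut preservation claim for the
cluster-preserving sparsifier: for disjoint `S, T ⊆ V`, the expected sparsifier cut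
weight `L·Σ_{u∈S}Σ_{v∈T} (q(u,v)+q(v,u))·w(u,v)/p̂(u,v)` is at most
`28·Σ_{u∈S}Σ_{v∈T} w(u,v)` (terms with `w(u,v) = 0` read as `0`). -/
theorem stmt18 (n : ℕ) (hn : 2 ≤ n)
    (w : Fin n → Fin n → ℝ) (hw0 : ∀ i j, 0 ≤ w i j)
    (hwsymm : ∀ i j, w i j = w j i)
    (hdeg : ∀ i, 0 < ∑ j, w i j)
    (C lam : ℝ) (hC : 0 < C) (hlam : 0 < lam)
    (p : Fin n → Fin n → ℝ)
    (hpdef : ∀ i j, p i j = C * Real.log n / lam * (w i j / ∑ j', w i j'))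
    (hple : ∀ i j, i ≠ j → p i j ≤ 1)
    (phat : Fin n → Fin n → ℝ)
    (hphat_lb : ∀ i j, i ≠ j → 6 / 7 * (p i j + p j i - p i j * p j i) ≤ phat i j)
    (hphat_ub : ∀ i j, i ≠ j → phat i j ≤ 36 / 5 * (p i j + p j i - p i j * p j i))
    (hphat_pos : ∀ i j, i ≠ j → 0 < w i j → 0 < phat i j)
    (q : Fin n → Fin n → ℝ) (hq0 : ∀ i j, 0 ≤ q i j)
    (hq_lb : ∀ i j, i ≠ j → w i j / (2 * ∑ j', w i j') ≤ q i j)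
    (hq_ub : ∀ i j, i ≠ j → q i j ≤ 2 * w i j / ∑ j', w i j')
    (S T : Finset (Fin n)) (hST : Disjoint S T) :
    6 * C * Real.log n / lam *
        ∑ u ∈ S, ∑ v ∈ T,
          (if w u v = 0 then 0 else (q u v + q v u) * w u v / phat u v) ≤
      28 * ∑ u ∈ S, ∑ v ∈ T, w u v :=
  stmt18_general n hn w hw0 hwsymm hdeg C lam hC hlam p hpdef hple phat hphat_lb q hq_ub S T hST
end
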